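/- arXiv:2601.02592 — 2 statements merged into one kernel-verified Lean document; each statement's English description precedes it below -/
import Mathlib

section
/- Let g ≥ 2 and let (g_1, ..., g_k) be a tuple of positive integers with g_1 ≤ g_2 ≤ ... ≤ g_k, k ≥ 2, and g_1 + ... + g_k = g. Then the quantity d = Σ_{1 ≤ i < j ≤ k} g_i·g_j satisfies d ≤ 2g − 3 if and only if the tuple is one of (1, g−1), (1, 1, g−2), (2, g−2), or (3, 3). -/
/-! Let `t` be the largest entry and `s = G - t` the sum of the others. From
`2 ∑_{i<j} g_i g_j + ∑ g_i² = G²` and `g_i ≤ t` one gets `s G ≤ 2d`, so `d ≤ 2G - 3` forces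
`s ≤ 3`. The entries other than `t` then form one of finitely many lists, and for each of them
`d ≤ 2G - 3` is a linear condition on `t`. -/

open Finset

namespace List

def pairwiseProdSum : List ℕ → ℕ
  | [] => 0
  | a :: l => a * l.sum + pairwiseProdSum l

@[simp] lemma pairwiseProdSum_nil : pairwiseProdSum [] = 0 := rfl

@[simp] lemma pairwiseProdSum_cons (a : ℕ) (l : List ℕ) :
    (a :: l).pairwiseProdSum = a * l.sum + l.pairwiseProdSum := rfl

lemma pairwiseProdSum_append_singleton (l : List ℕ) (t : ℕ) :
    (l ++ [t]).pairwiseProdSum = l.pairwiseProdSum + l.sum * t := by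
  induction l with
  | nil => simp
  | cons a l ih =>
    simp only [cons_append, pairwiseProdSum_cons, ih, sum_append, sum_cons, sum_nil, add_zero]
    ring

lemma sq_sum_le_two_mul_pairwiseProdSum_add {l : List ℕ} {t : ℕ} (hle : ∀ a ∈ l, a ≤ t) :
    l.sum ^ 2 ≤ 2 * l.pairwiseProdSum + t * l.sum := by
  induction l with
  | nil => simp
  | cons a l ih =>
    simp only [mem_cons, forall_eq_or_imp] at hle
    simp only [sum_cons, pairwiseProdSum_cons]
    nlinarith [ih hle.2, Nat.mul_le_mul_right a hle.1]

lemma sum_mul_le_two_mul_pairwiseProdSum_append {l : List ℕ} {t : ℕ} (hle : ∀ a ∈ l, a ≤ t) :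
    l.sum * (l.sum + t) ≤ 2 * (l ++ [t]).pairwiseProdSum := by
  rw [pairwiseProdSum_append_singleton]
  nlinarith [sq_sum_le_two_mul_pairwiseProdSum_add hle]

lemma eq_of_pos_of_sum_le_three {l : List ℕ} (hne : l ≠ []) (hpos : ∀ a ∈ l, 0 < a)
    (hsum : l.sum ≤ 3) :
    l = [1] ∨ l = [2] ∨ l = [3] ∨ l = [1, 1] ∨ l = [1, 2] ∨ l = [2, 1] ∨ l = [1, 1, 1] := by
  rcases l with _ | ⟨a, _ | ⟨b, _ | ⟨c, _ | ⟨e, l⟩⟩⟩⟩ <;> simp at hne hpos hsum ⊢ <;> omega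

lemma pairwiseProdSum_append_add_three_le_iff {l : List ℕ} {t G : ℕ} (hne : l ≠ [])
    (hpos : ∀ a ∈ l, 0 < a) (hle : ∀ a ∈ l, a ≤ t) (hG : l.sum + t = G) :
    (l ++ [t]).pairwiseProdSum + 3 ≤ 2 * G ↔
      l ++ [t] = [1, G - 1] ∨ l ++ [t] = [1, 1, G - 2] ∨ l ++ [t] = [2, G - 2] ∨
        l ++ [t] = [3, 3] := by
  constructor
  · intro h
    have hs : l.sum ≤ 3 := by
      have := sum_mul_le_two_mul_pairwiseProdSum_append hle
      subst hG
      nlinarith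
    rcases eq_of_pos_of_sum_le_three hne hpos hs with rfl | rfl | rfl | rfl | rfl | rfl | rfl <;>
      simp at hle hG h ⊢ <;> omega
  · have hG2 : 2 ≤ G := by
      obtain ⟨a, ha⟩ := exists_mem_of_ne_nil l hne
      have := le_sum_of_mem ha
      have := hle a ha
      have := hpos a ha
      omega
    have hsum : (l ++ [t]).sum = G := by simp [hG]
    rintro (h | h | h | h) <;> rw [h] at hsum ⊢ <;> simp at hsum ⊢ <;> omega

end List

lemma Fin.sum_sum_Ioi_mul_eq_pairwiseProdSum {n : ℕ} (f : Fin n → ℕ) :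
    ∑ i, ∑ j ∈ Ioi i, f i * f j = (List.ofFn f).pairwiseProdSum := by
  induction n with
  | zero => simp
  | succ n ih =>
    rw [Fin.sum_univ_succ, Fin.Ioi_zero_eq_map, List.ofFn_succ, List.pairwiseProdSum_cons,
      ← ih, List.sum_ofFn, sum_map, ← mul_sum]
    simp only [← Fin.map_succEmb_Ioi, sum_map, Fin.coe_succEmb]

theorem stmt0_general {k : ℕ} (g : Fin k → ℕ) (G : ℕ) (hk : 2 ≤ k)
    (hpos : ∀ i, 0 < g i) (hmono : Monotone g) (hsum : ∑ i, g i = G) :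
    ((∑ i : Fin k, ∑ j ∈ Finset.Ioi i, g i * g j : ℕ) : ℤ) ≤ 2 * (G : ℤ) - 3 ↔
      (List.ofFn g = [1, G - 1] ∨ List.ofFn g = [1, 1, G - 2] ∨
       List.ofFn g = [2, G - 2] ∨ List.ofFn g = [3, 3]) := by
  obtain ⟨m, rfl⟩ : ∃ m, k = m + 2 := ⟨k - 2, by omega⟩
  set l := List.ofFn fun i : Fin (m + 1) => g i.castSucc
  have hsplit : List.ofFn g = l ++ [g (Fin.last _)] := by
    rw [List.ofFn_succ', List.concat_eq_append]
  have hl_pos : ∀ a ∈ l, 0 < a := by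
    intro _ ha
    obtain ⟨i, rfl⟩ := List.mem_ofFn.1 ha
    exact hpos _
  have hl_le : ∀ a ∈ l, a ≤ g (Fin.last _) := by
    intro _ ha
    obtain ⟨i, rfl⟩ := List.mem_ofFn.1 ha
    exact hmono (Fin.le_last _)
  have hl_sum : l.sum + g (Fin.last _) = G := by
    rw [← hsum, Fin.sum_univ_castSucc, List.sum_ofFn]
  rw [Fin.sum_sum_Ioi_mul_eq_pairwiseProdSum, hsplit,
    ← List.pairwiseProdSum_append_add_three_le_iff (by simp [l]) hl_pos hl_le hl_sum]
  omega

/-- Classification of tuples `(g_1,...,g_k)` (positive, sorted, summing to `g ≥ 2`)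
with `∑_{i<j} g_i g_j ≤ 2g - 3`. -/
theorem stmt0 {k : ℕ} (g : Fin k → ℕ) (G : ℕ) (hk : 2 ≤ k) (hG : 2 ≤ G)
    (hpos : ∀ i, 0 < g i) (hmono : Monotone g) (hsum : ∑ i, g i = G) :
    ((∑ i : Fin k, ∑ j ∈ Finset.Ioi i, g i * g j : ℕ) : ℤ) ≤ 2 * (G : ℤ) - 3 ↔
      (List.ofFn g = [1, G - 1] ∨ List.ofFn g = [1, 1, G - 2] ∨
       List.ofFn g = [2, G - 2] ∨ List.ofFn g = [3, 3]) :=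
  stmt0_general g G hk hpos hmono hsum
end

section
/- Let k ≥ 3 and let g_1 ≤ g_2 ≤ ... ≤ g_k be positive integers with g_1 = 1, g_2 ≥ 2, and sum g. Then Σ_{1 ≤ i < j ≤ k} g_i·g_j ≥ 3g − 7. -/
/-!
Write `a = g₁` and `r = g₂ + ⋯ + g_{k-1}` (0-indexed), so `G = 1 + a + r`. The pairs with
smaller index `0` or `1` already contribute `(a + r) + a * r`, and `r ≥ g₂ ≥ a ≥ 2`; the claim
then reduces to `(a - 2) * (r - 2) ≥ 0`.
-/

open Finset

theorem Finset.sum_Ioi_eq_add_sum_Ioi_of_covBy {ι M : Type*} [LinearOrder ι]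
    [LocallyFiniteOrderTop ι] [AddCommMonoid M] (f : ι → M) {a b : ι} (hab : a ⋖ b) :
    ∑ x ∈ Ioi a, f x = f b + ∑ x ∈ Ioi b, f x := by
  have hI : Ioi a = Ici b := coe_injective (by rw [coe_Ioi, coe_Ici]; exact hab.Ioi_eq)
  rw [add_sum_Ioi_eq_sum_Ici, hI]

theorem Finset.mul_sum_Ioi_add_mul_sum_Ioi_le_sum_pairs {ι R : Type*} [Fintype ι] [Preorder ι]
    [LocallyFiniteOrderTop ι] [CommSemiring R] [PartialOrder R] [IsOrderedRing R]
    {f : ι → R} (hf : ∀ i, 0 ≤ f i) {a b : ι} (hab : a ≠ b) :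
    f a * ∑ x ∈ Ioi a, f x + f b * ∑ x ∈ Ioi b, f x ≤ ∑ i, ∑ j ∈ Ioi i, f i * f j := by
  classical
  simp_rw [mul_sum]
  rw [← sum_pair (f := fun i => ∑ j ∈ Ioi i, f i * f j) hab]
  exact sum_le_sum_of_subset_of_nonneg (subset_univ _) fun i _ _ =>
    sum_nonneg fun j _ => mul_nonneg (hf i) (hf j)

theorem three_mul_one_add_add_le {a r : ℕ} (ha : 2 ≤ a) (hr : 2 ≤ r) :
    3 * (1 + a + r) ≤ (a + r) + a * r + 7 := by
  nlinarith [Nat.mul_le_mul ha hr]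

/-- Case `g_1 = 1, g_2 ≥ 2, k ≥ 3`: the codimension is at least `3g - 7`. -/
theorem stmt3 {k : ℕ} (g : Fin k → ℕ) (G : ℕ) (hk : 3 ≤ k)
    (hmono : Monotone g)
    (h1 : g ⟨0, by omega⟩ = 1) (h2 : 2 ≤ g ⟨1, by omega⟩)
    (hsum : ∑ i, g i = G) :
    3 * (G : ℤ) - 7 ≤ (∑ i : Fin k, ∑ j ∈ Finset.Ioi i, g i * g j : ℕ) := by
  set i₀ : Fin k := ⟨0, by omega⟩
  set i₁ : Fin k := ⟨1, by omega⟩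
  set i₂ : Fin k := ⟨2, by omega⟩
  have hcov : i₀ ⋖ i₁ := Fin.covBy_iff.2 (Order.covBy_add_one 0)
  have htail : ∑ j ∈ Ioi i₀, g j = g i₁ + ∑ j ∈ Ioi i₁, g j :=
    sum_Ioi_eq_add_sum_Ioi_of_covBy g hcov
  have hG : G = 1 + g i₁ + ∑ j ∈ Ioi i₁, g j := by
    have hbot : Ici i₀ = univ :=
      eq_univ_of_forall fun i => mem_Ici.2 (Fin.le_def.2 (Nat.zero_le _))
    rw [← hsum, ← hbot, ← add_sum_Ioi_eq_sum_Ici, h1, htail, add_assoc]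
  have hr : 2 ≤ ∑ j ∈ Ioi i₁, g j := calc
    2 ≤ g i₁ := h2
    _ ≤ g i₂ := hmono (Fin.mk_le_mk.2 (by omega))
    _ ≤ ∑ j ∈ Ioi i₁, g j :=
      single_le_sum (fun _ _ => Nat.zero_le _) (mem_Ioi.2 (Fin.mk_lt_mk.2 (by omega)))
  have hpairs := mul_sum_Ioi_add_mul_sum_Ioi_le_sum_pairs (fun i => Nat.zero_le (g i))
    (show i₀ ≠ i₁ from hcov.lt.ne)
  rw [h1, one_mul, htail] at hpairs
  have hineq := three_mul_one_add_add_le h2 hr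
  omega
end
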